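/- arXiv:2004.12374 — 8 statements merged into one kernel-verified Lean document; each statement's English description precedes it below -/
import Mathlib

section
/- Let U ⊆ ℝ² be open, let T, λ : U → ℝ be differentiable, and let P : U → ℝ be differentiable and nowhere zero, with 1 + T(x,y)P(x,y) ≠ 0 and 1 − T(x,y)P(x,y) ≠ 0 on U. Suppose that the two slope fields m₁ = (P − T)/(1 + PT) and m₂ = −(T + P)/(1 − PT) are geodesic for the conformal metric e^{2λ}(dx² + dy²), i.e. for m = m₁ and m = m₂ one has ∂_x m + m ∂_y m = (m² + 1)(λ_y − λ_x m) at every point of U. Then the partial derivatives of P satisfy P_x = ((1+P²)/(P(1+T²))) · [ ((1+P²)/(1+T²))·T·T_x + ((P²−T²)/(1+T²))·T_y + (T²−P²)·λ_x + T(1+P²)·λ_y ] and P_y = ((1+P²)/(P(1+T²))) · [ ((1−T²P²)/(1+T²))·T_x − ((1+P²)/(1+T²))·T·T_y + T(1+P²)·λ_x + (1−T²P²)·λ_y ] on U. -/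
/-!
With `T = tan α` and `P = tan β`, the slope fields are `m₁ = tan (β - α)` and `m₂ = tan (-β - α)`,
so `m₂` is `m₁` with `P` replaced by `-P`. The derivative of `(P - T) / (1 + P T)` is
`((1 + T²) dP - (1 + P²) dT) / (1 + P T)²`, hence each geodesic equation is linear in
`(P_x, P_y)`. The two linear equations have determinant `2 P (1 + T²) ≠ 0`, and solving them
gives the formulas.
-/

/-- Partial derivative in the first coordinate direction. -/
noncomputable def pdx (f : ℝ × ℝ → ℝ) (p : ℝ × ℝ) : ℝ := fderiv ℝ f p (1, 0)

/-- Partial derivative in the second coordinate direction. -/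
noncomputable def pdy (f : ℝ × ℝ → ℝ) (p : ℝ × ℝ) : ℝ := fderiv ℝ f p (0, 1)

theorem HasFDerivAt.div {E : Type*} [NormedAddCommGroup E] [NormedSpace ℝ E]
    {f g : E → ℝ} {f' g' : E →L[ℝ] ℝ} {x : E}
    (hf : HasFDerivAt f f' x) (hg : HasFDerivAt g g' x) (hx : g x ≠ 0) :
    HasFDerivAt (fun y => f y / g y) ((g x ^ 2)⁻¹ • (g x • f' - f x • g')) x := by
  have hinv : HasFDerivAt (fun y => (g y)⁻¹) (-(g x ^ 2)⁻¹ • g') x :=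
    (hasDerivAt_inv hx).comp_hasFDerivAt x hg
  have hmul := hf.fun_mul hinv
  simp only [← div_eq_mul_inv] at hmul
  refine hmul.congr_fderiv ?_
  ext v
  simp only [add_apply, smul_apply, smul_eq_mul, neg_mul, mul_neg, sub_apply]
  field_simp
  ring

theorem fderiv_sub_div_one_add_mul_apply {E : Type*} [NormedAddCommGroup E] [NormedSpace ℝ E]
    {T P : E → ℝ} {p : E} (hT : DifferentiableAt ℝ T p) (hP : DifferentiableAt ℝ P p)
    (h : 1 + P p * T p ≠ 0) (v : E) :
    fderiv ℝ (fun q => (P q - T q) / (1 + P q * T q)) p v =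
      ((1 + T p ^ 2) * fderiv ℝ P p v - (1 + P p ^ 2) * fderiv ℝ T p v) / (1 + P p * T p) ^ 2 := by
  have hden : HasFDerivAt (fun q => 1 + P q * T q)
      (0 + (P p • fderiv ℝ T p + T p • fderiv ℝ P p)) p :=
    (hasFDerivAt_const 1 p).add (hP.hasFDerivAt.mul hT.hasFDerivAt)
  rw [((hP.hasFDerivAt.fun_sub hT.hasFDerivAt).div hden h).fderiv]
  simp only [smul_apply, sub_apply, add_apply, zero_apply, smul_eq_mul]
  field_simp
  ring

/-- The geodesic equation at `p` for the slope field `m` of the metric `e^{2 lam} (dx² + dy²)`. -/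
def IsGeodesicSlopeAt (lam m : ℝ × ℝ → ℝ) (p : ℝ × ℝ) : Prop :=
  pdx m p + m p * pdy m p = (m p ^ 2 + 1) * (pdy lam p - pdx lam p * m p)

theorem IsGeodesicSlopeAt.linear_of_sub_div_one_add_mul {T lam P : ℝ × ℝ → ℝ} {p : ℝ × ℝ}
    (hT : DifferentiableAt ℝ T p) (hP : DifferentiableAt ℝ P p) (h : 1 + P p * T p ≠ 0)
    (hgeo : IsGeodesicSlopeAt lam (fun q => (P q - T q) / (1 + P q * T q)) p) :
    (1 + T p ^ 2) * (pdx P p * (1 + P p * T p) + pdy P p * (P p - T p)) =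
      (1 + P p ^ 2) * (pdx T p * (1 + P p * T p) + pdy T p * (P p - T p)
        + (1 + T p ^ 2) * (pdy lam p * (1 + P p * T p) - pdx lam p * (P p - T p))) := by
  unfold IsGeodesicSlopeAt pdx pdy at hgeo
  rw [fderiv_sub_div_one_add_mul_apply hT hP h, fderiv_sub_div_one_add_mul_apply hT hP h] at hgeo
  unfold pdx pdy
  have h' : 1 + T p * P p ≠ 0 := by rwa [mul_comm]
  field_simp at hgeo
  linear_combination hgeo

theorem quadratic_integral_P_derivatives_general
    (U : Set (ℝ × ℝ))
    (T lam P : ℝ × ℝ → ℝ)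
    (hT : ∀ p ∈ U, DifferentiableAt ℝ T p)
    (hP : ∀ p ∈ U, DifferentiableAt ℝ P p)
    (hP0 : ∀ p ∈ U, P p ≠ 0)
    (h1 : ∀ p ∈ U, 1 + T p * P p ≠ 0)
    (h2 : ∀ p ∈ U, 1 - T p * P p ≠ 0)
    (m₁ m₂ : ℝ × ℝ → ℝ)
    (hm₁ : ∀ p, m₁ p = (P p - T p) / (1 + P p * T p))
    (hm₂ : ∀ p, m₂ p = -(T p + P p) / (1 - P p * T p))
    (hgeo₁ : ∀ p ∈ U, pdx m₁ p + m₁ p * pdy m₁ p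
      = ((m₁ p) ^ 2 + 1) * (pdy lam p - pdx lam p * m₁ p))
    (hgeo₂ : ∀ p ∈ U, pdx m₂ p + m₂ p * pdy m₂ p
      = ((m₂ p) ^ 2 + 1) * (pdy lam p - pdx lam p * m₂ p)) :
    ∀ p ∈ U,
      pdx P p = ((1 + (P p) ^ 2) / (P p * (1 + (T p) ^ 2))) *
        ( ((1 + (P p) ^ 2) / (1 + (T p) ^ 2)) * T p * pdx T p
          + (((P p) ^ 2 - (T p) ^ 2) / (1 + (T p) ^ 2)) * pdy T p
          + ((T p) ^ 2 - (P p) ^ 2) * pdx lam p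
          + T p * (1 + (P p) ^ 2) * pdy lam p )
      ∧
      pdy P p = ((1 + (P p) ^ 2) / (P p * (1 + (T p) ^ 2))) *
        ( ((1 - (T p) ^ 2 * (P p) ^ 2) / (1 + (T p) ^ 2)) * pdx T p
          - ((1 + (P p) ^ 2) / (1 + (T p) ^ 2)) * T p * pdy T p
          + T p * (1 + (P p) ^ 2) * pdx lam p
          + (1 - (T p) ^ 2 * (P p) ^ 2) * pdy lam p ) := by
  intro p hp
  have hPT : 1 + P p * T p ≠ 0 := mul_comm (T p) (P p) ▸ h1 p hp
  have hPT' : 1 + -P p * T p ≠ 0 := by rw [neg_mul, ← sub_eq_add_neg, mul_comm]; exact h2 p hp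
  have hm₂' : m₂ = fun q => (-P q - T q) / (1 + -P q * T q) :=
    funext fun q => by rw [hm₂]; congr 1 <;> ring
  have E₁ := IsGeodesicSlopeAt.linear_of_sub_div_one_add_mul (hT p hp) (hP p hp) hPT
    (funext hm₁ ▸ hgeo₁ p hp)
  have E₂ := IsGeodesicSlopeAt.linear_of_sub_div_one_add_mul (P := fun q => -P q)
    (hT p hp) (hP p hp).neg hPT' (hm₂' ▸ hgeo₂ p hp)
  simp only [pdx, pdy, fderiv_fun_neg, neg_apply] at E₁ E₂ ⊢
  have hPp := hP0 p hp
  have hT2 : 1 + T p ^ 2 ≠ 0 := by positivity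
  constructor
  · field_simp
    linear_combination ((T p + P p) / 2) * E₁ - ((P p - T p) / 2) * E₂
  · field_simp
    linear_combination ((1 - P p * T p) / 2) * E₁ + ((1 + P p * T p) / 2) * E₂

/-- if the two slope fields `m₁ = (P − T)/(1 + PT)` and
`m₂ = −(T + P)/(1 − PT)` are geodesic for the conformal metric `e^{2λ}(dx² + dy²)`,
then the partial derivatives of `P` satisfy the stated first-order system. -/
theorem quadratic_integral_P_derivatives
    (U : Set (ℝ × ℝ)) (hU : IsOpen U)
    (T lam P : ℝ × ℝ → ℝ)
    (hT : ∀ p ∈ U, DifferentiableAt ℝ T p)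
    (hlam : ∀ p ∈ U, DifferentiableAt ℝ lam p)
    (hP : ∀ p ∈ U, DifferentiableAt ℝ P p)
    (hP0 : ∀ p ∈ U, P p ≠ 0)
    (h1 : ∀ p ∈ U, 1 + T p * P p ≠ 0)
    (h2 : ∀ p ∈ U, 1 - T p * P p ≠ 0)
    (m₁ m₂ : ℝ × ℝ → ℝ)
    (hm₁ : ∀ p, m₁ p = (P p - T p) / (1 + P p * T p))
    (hm₂ : ∀ p, m₂ p = -(T p + P p) / (1 - P p * T p))
    (hgeo₁ : ∀ p ∈ U, pdx m₁ p + m₁ p * pdy m₁ p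
      = ((m₁ p) ^ 2 + 1) * (pdy lam p - pdx lam p * m₁ p))
    (hgeo₂ : ∀ p ∈ U, pdx m₂ p + m₂ p * pdy m₂ p
      = ((m₂ p) ^ 2 + 1) * (pdy lam p - pdx lam p * m₂ p)) :
    ∀ p ∈ U,
      pdx P p = ((1 + (P p) ^ 2) / (P p * (1 + (T p) ^ 2))) *
        ( ((1 + (P p) ^ 2) / (1 + (T p) ^ 2)) * T p * pdx T p
          + (((P p) ^ 2 - (T p) ^ 2) / (1 + (T p) ^ 2)) * pdy T p
          + ((T p) ^ 2 - (P p) ^ 2) * pdx lam p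
          + T p * (1 + (P p) ^ 2) * pdy lam p )
      ∧
      pdy P p = ((1 + (P p) ^ 2) / (P p * (1 + (T p) ^ 2))) *
        ( ((1 - (T p) ^ 2 * (P p) ^ 2) / (1 + (T p) ^ 2)) * pdx T p
          - ((1 + (P p) ^ 2) / (1 + (T p) ^ 2)) * T p * pdy T p
          + T p * (1 + (P p) ^ 2) * pdx lam p
          + (1 - (T p) ^ 2 * (P p) ^ 2) * pdy lam p ) :=
  quadratic_integral_P_derivatives_general U T lam P hT hP hP0 h1 h2 m₁ m₂ hm₁ hm₂ hgeo₁ hgeo₂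
end

section
/- Let U ⊆ ℝ² be open, let Λ : U → ℝ be C² and positive, and let P : U → ℝ be differentiable and nowhere zero, with partial derivatives satisfying P_u = −P(1+P²)Λ_u/(2Λ) and P_v = (1+P²)Λ_v/(2PΛ) at every point of U. Then the mixed second partial derivative of Λ vanishes: Λ_{uv} = 0 on U. (Hence Λ(u,v) = f(u) + g(v) locally, i.e. the metric Λ(du² + dv²) has Liouville form and its geodesic flow admits a quadratic first integral.) -/
/-! `Λ / (1 + P²)` is constant in `v` and has `u`-derivative `Λ_u`, both by direct computation from
the equations for `P`. Hence near any point `Λ_u(u, v) = ∂_u (Λ / (1 + P²))(u, v)` does not depend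
on `v`, so `Λ_{uv} = 0`; no second derivatives of `P` are needed. -/

open Filter Topology

/-- Partial derivative in the first coordinate direction. -/
noncomputable def pdu (f : ℝ × ℝ → ℝ) (p : ℝ × ℝ) : ℝ := fderiv ℝ f p (1, 0)

/-- Partial derivative in the second coordinate direction. -/
noncomputable def pdv (f : ℝ × ℝ → ℝ) (p : ℝ × ℝ) : ℝ := fderiv ℝ f p (0, 1)

section Slices

variable {F : ℝ × ℝ → ℝ} {p : ℝ × ℝ}

theorem DifferentiableAt.hasDerivAt_pdu (hF : DifferentiableAt ℝ F p) :
    HasDerivAt (fun s => F (s, p.2)) (pdu F p) p.1 :=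
  hF.hasFDerivAt.comp_hasDerivAt p.1 ((hasDerivAt_id p.1).prodMk (hasDerivAt_const p.1 p.2))

theorem DifferentiableAt.hasDerivAt_pdv (hF : DifferentiableAt ℝ F p) :
    HasDerivAt (fun t => F (p.1, t)) (pdv F p) p.2 :=
  hF.hasFDerivAt.comp_hasDerivAt p.2 ((hasDerivAt_const p.2 p.1).prodMk (hasDerivAt_id p.2))

theorem ContDiffAt.differentiableAt_pdu (hF : ContDiffAt ℝ 2 F p) :
    DifferentiableAt ℝ (pdu F) p :=
  ((hF.fderiv_right (by norm_num)).differentiableAt one_ne_zero).clm_apply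
    (differentiableAt_const _)

theorem pdv_eq_zero_of_eventually_eq (hF : DifferentiableAt ℝ F p)
    (hconst : ∀ᶠ t in 𝓝 p.2, F (p.1, t) = F p) : pdv F p = 0 :=
  hF.hasDerivAt_pdv.unique ((hasDerivAt_const p.2 (F p)).congr_of_eventuallyEq hconst)

end Slices

section LocallyConstant

variable {U : Set (ℝ × ℝ)} {g h : ℝ × ℝ → ℝ} {p : ℝ × ℝ}

theorem eventually_eq_of_hasDerivAt_snd_eq_zero (hU : IsOpen U)
    (hg : ∀ q ∈ U, HasDerivAt (fun t => g (q.1, t)) 0 q.2) (hp : p ∈ U) :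
    ∀ᶠ q in 𝓝 p, g q = g (q.1, p.2) := by
  obtain ⟨ε, hε, hball⟩ := Metric.isOpen_iff.mp hU p hp
  filter_upwards [Metric.ball_mem_nhds p hε] with q hq
  rw [← ball_prod_same] at hq hball
  have hslice : ∀ t ∈ Metric.ball p.2 ε, HasDerivAt (fun t => g (q.1, t)) 0 t := fun t ht =>
    hg (q.1, t) (hball ⟨hq.1, ht⟩)
  exact Metric.isOpen_ball.is_const_of_deriv_eq_zero (convex_ball p.2 ε).isPreconnected
    (fun t ht => (hslice t ht).differentiableAt.differentiableWithinAt)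
    (fun t ht => (hslice t ht).deriv) hq.2 (Metric.mem_ball_self hε)

theorem eventually_eq_of_hasDerivAt_fst_of_hasDerivAt_snd_eq_zero (hU : IsOpen U)
    (hg : ∀ q ∈ U, HasDerivAt (fun t => g (q.1, t)) 0 q.2)
    (hgh : ∀ q ∈ U, HasDerivAt (fun s => g (s, q.2)) (h q) q.1) (hp : p ∈ U) :
    ∀ᶠ t in 𝓝 p.2, h (p.1, t) = h p := by
  have hnear : Tendsto (fun t => (p.1, t)) (𝓝 p.2) (𝓝 p) :=
    (continuous_const.prodMk continuous_id).tendsto' _ _ rfl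
  filter_upwards [hnear.eventually (hU.mem_nhds hp),
    hnear.eventually (eventually_eventually_nhds.mpr
      (eventually_eq_of_hasDerivAt_snd_eq_zero hU hg hp))] with t htU hconst
  have hrow : (fun s => g (s, t)) =ᶠ[𝓝 p.1] fun s => g (s, p.2) :=
    ((continuous_id.prodMk continuous_const).tendsto' p.1 (p.1, t) rfl).eventually hconst
  exact (hgh _ htU).unique ((hgh p hp).congr_of_eventuallyEq hrow)

end LocallyConstant

theorem HasDerivAt.div_one_add_sq {l P : ℝ → ℝ} {l' P' x : ℝ} (hl : HasDerivAt l l' x)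
    (hP : HasDerivAt P P' x) :
    HasDerivAt (fun s => l s / (1 + P s ^ 2))
      ((l' * (1 + P x ^ 2) - l x * (2 * P x * P')) / (1 + P x ^ 2) ^ 2) x := by
  have hden : 1 + P x ^ 2 ≠ 0 := by positivity
  simpa using hl.fun_div ((hP.pow 2).const_add 1) hden

/-- if `P` is a nowhere-zero differentiable solution of the
first-order system `P_u = −P(1+P²)Λ_u/(2Λ)`, `P_v = (1+P²)Λ_v/(2PΛ)` with `Λ` a
positive `C²` function, then the mixed partial `Λ_{uv}` vanishes on `U`
(so `Λ = f(u) + g(v)` locally and the metric has Liouville form). -/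
theorem mixed_partial_of_Lambda_vanishes
    (U : Set (ℝ × ℝ)) (hU : IsOpen U)
    (Lam P : ℝ × ℝ → ℝ)
    (hLam : ContDiffOn ℝ 2 Lam U)
    (hLampos : ∀ p ∈ U, 0 < Lam p)
    (hP : ∀ p ∈ U, DifferentiableAt ℝ P p)
    (hP0 : ∀ p ∈ U, P p ≠ 0)
    (hPu : ∀ p ∈ U, pdu P p = -(P p * (1 + (P p) ^ 2) * pdu Lam p) / (2 * Lam p))
    (hPv : ∀ p ∈ U, pdv P p = (1 + (P p) ^ 2) * pdv Lam p / (2 * P p * Lam p)) :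
    ∀ p ∈ U, pdv (fun q => pdu Lam q) p = 0 := by
  have hLamC2 : ∀ q ∈ U, ContDiffAt ℝ 2 Lam q := fun q hq => hLam.contDiffAt (hU.mem_nhds hq)
  have hLamD : ∀ q ∈ U, DifferentiableAt ℝ Lam q := fun q hq =>
    (hLamC2 q hq).differentiableAt (by norm_num)
  have hv : ∀ q ∈ U, HasDerivAt (fun t => Lam (q.1, t) / (1 + P (q.1, t) ^ 2)) 0 q.2 := by
    intro q hq
    convert (hLamD q hq).hasDerivAt_pdv.div_one_add_sq (hP q hq).hasDerivAt_pdv using 1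
    have := (hLampos q hq).ne'
    have := hP0 q hq
    rw [hPv q hq]
    field_simp
    ring
  have hu : ∀ q ∈ U,
      HasDerivAt (fun s => Lam (s, q.2) / (1 + P (s, q.2) ^ 2)) (pdu Lam q) q.1 := by
    intro q hq
    convert (hLamD q hq).hasDerivAt_pdu.div_one_add_sq (hP q hq).hasDerivAt_pdu using 1
    have := (hLampos q hq).ne'
    rw [hPu q hq]
    field_simp
    ring
  intro p hp
  exact pdv_eq_zero_of_eventually_eq (hLamC2 p hp).differentiableAt_pdu
    (eventually_eq_of_hasDerivAt_fst_of_hasDerivAt_snd_eq_zero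
      (g := fun q => Lam q / (1 + P q ^ 2)) hU hv hu hp)
end

section
/- Let U ⊆ ℝ² be open, let Λ : U → ℝ be differentiable and positive, and let P : U → ℝ be differentiable and nowhere zero, satisfying P_u = −P(1+P²)Λ_u/(2Λ) and P_v = (1+P²)Λ_v/(2PΛ) on U. Define on U × ℝ² the functions H(u,v,p,q) = (p² + q²)/(2Λ(u,v)) and I₂(u,v,p,q) = (q² − P(u,v)² p²)/(1 + P(u,v)²). Then the canonical Poisson bracket {H, I₂} = H_p (I₂)_u − H_u (I₂)_p + H_q (I₂)_v − H_v (I₂)_q vanishes identically on U × ℝ². In other words, the integrating factor μ = 1/(1+P²) makes μ(q − Pp)(q + Pp) a quadratic first integral of the geodesic flow of the metric Λ(du² + dv²). -/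
/-- Canonical Poisson bracket `{F,G} = F_p G_u − F_u G_p + F_q G_v − F_v G_q` of two
functions `F G : (u,v) ↦ (p,q) ↦ ℝ` on phase space `ℝ² × ℝ²`. -/
noncomputable def poissonBracket (F G : ℝ × ℝ → ℝ × ℝ → ℝ) (x pq : ℝ × ℝ) : ℝ :=
    fderiv ℝ (F x) pq (1, 0) * fderiv ℝ (fun y => G y pq) x (1, 0)
  - fderiv ℝ (fun y => F y pq) x (1, 0) * fderiv ℝ (G x) pq (1, 0)
  + fderiv ℝ (F x) pq (0, 1) * fderiv ℝ (fun y => G y pq) x (0, 1)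
  - fderiv ℝ (fun y => F y pq) x (0, 1) * fderiv ℝ (G x) pq (0, 1)

/-!
`H` and `I₂` are diagonal quadratic forms in the momenta whose coefficients depend on the
position only through `Λ` and `P` respectively. By the chain rule, `{H, I₂}` is therefore
`(p² + q²)` times a linear form in `(p, q)` whose coefficients are the residuals of the two
equations for `P`.
-/

theorem fderiv_comp_apply_of_hasDerivAt {E : Type*} [NormedAddCommGroup E] [NormedSpace ℝ E]
    {f : E → ℝ} {g : ℝ → ℝ} {g' : ℝ} {x : E} (hf : DifferentiableAt ℝ f x)
    (hg : HasDerivAt g g' (f x)) (w : E) :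
    fderiv ℝ (fun y => g (f y)) x w = g' * fderiv ℝ f x w := by
  have h : HasFDerivAt (fun y => g (f y)) (g' • fderiv ℝ f x) x :=
    hg.comp_hasFDerivAt x hf.hasFDerivAt
  simp [h.fderiv]

theorem fderiv_weighted_sum_sq_apply (a b : ℝ) (z w : ℝ × ℝ) :
    fderiv ℝ (fun pq : ℝ × ℝ => a * pq.1 ^ 2 + b * pq.2 ^ 2) z w
      = 2 * a * z.1 * w.1 + 2 * b * z.2 * w.2 := by
  have h : HasFDerivAt (fun pq : ℝ × ℝ => a * pq.1 ^ 2 + b * pq.2 ^ 2) _ z :=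
    ((hasFDerivAt_fst (𝕜 := ℝ)).pow 2 |>.const_mul a).add
      ((hasFDerivAt_snd (𝕜 := ℝ)).pow 2 |>.const_mul b)
  simp [h.fderiv]
  ring

noncomputable def geodesicHamiltonian (Lam : ℝ × ℝ → ℝ) (x pq : ℝ × ℝ) : ℝ :=
  (pq.1 ^ 2 + pq.2 ^ 2) / (2 * Lam x)

noncomputable def slopeIntegral (P : ℝ × ℝ → ℝ) (x pq : ℝ × ℝ) : ℝ :=
  (pq.2 ^ 2 - P x ^ 2 * pq.1 ^ 2) / (1 + P x ^ 2)

theorem fderiv_geodesicHamiltonian_momentum (Lam : ℝ × ℝ → ℝ) (x z w : ℝ × ℝ) :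
    fderiv ℝ (geodesicHamiltonian Lam x) z w = (z.1 * w.1 + z.2 * w.2) / Lam x := by
  have h : geodesicHamiltonian Lam x
      = fun pq => (2 * Lam x)⁻¹ * pq.1 ^ 2 + (2 * Lam x)⁻¹ * pq.2 ^ 2 := by
    funext pq
    rw [geodesicHamiltonian]
    ring
  rw [h, fderiv_weighted_sum_sq_apply]
  ring

theorem fderiv_slopeIntegral_momentum (P : ℝ × ℝ → ℝ) (x z w : ℝ × ℝ) :
    fderiv ℝ (slopeIntegral P x) z w
      = 2 * (z.2 * w.2 - P x ^ 2 * z.1 * w.1) / (1 + P x ^ 2) := by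
  have h : slopeIntegral P x
      = fun pq => -(P x ^ 2 / (1 + P x ^ 2)) * pq.1 ^ 2 + (1 + P x ^ 2)⁻¹ * pq.2 ^ 2 := by
    funext pq
    rw [slopeIntegral]
    ring
  rw [h, fderiv_weighted_sum_sq_apply]
  ring

section

variable {Lam P : ℝ × ℝ → ℝ} {x : ℝ × ℝ}

theorem fderiv_geodesicHamiltonian_position (hLam : DifferentiableAt ℝ Lam x)
    (hLam0 : Lam x ≠ 0) (pq w : ℝ × ℝ) :
    fderiv ℝ (fun y => geodesicHamiltonian Lam y pq) x w
      = -(pq.1 ^ 2 + pq.2 ^ 2) / (2 * Lam x ^ 2) * fderiv ℝ Lam x w := by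
  have hderiv : HasDerivAt (fun t => (pq.1 ^ 2 + pq.2 ^ 2) / (2 * t))
      (-(pq.1 ^ 2 + pq.2 ^ 2) / (2 * Lam x ^ 2)) (Lam x) := by
    have h := (hasDerivAt_inv hLam0).const_mul ((pq.1 ^ 2 + pq.2 ^ 2) / 2)
    rw [show (fun t => (pq.1 ^ 2 + pq.2 ^ 2) / (2 * t))
        = fun t => (pq.1 ^ 2 + pq.2 ^ 2) / 2 * t⁻¹ by funext t; ring]
    exact h.congr_deriv (by ring)
  exact fderiv_comp_apply_of_hasDerivAt hLam hderiv w

theorem fderiv_slopeIntegral_position (hP : DifferentiableAt ℝ P x) (pq w : ℝ × ℝ) :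
    fderiv ℝ (fun y => slopeIntegral P y pq) x w
      = -2 * P x * (pq.1 ^ 2 + pq.2 ^ 2) / (1 + P x ^ 2) ^ 2 * fderiv ℝ P x w := by
  have hden : 1 + P x ^ 2 ≠ 0 := by positivity
  have hderiv : HasDerivAt (fun t => (pq.2 ^ 2 - t ^ 2 * pq.1 ^ 2) / (1 + t ^ 2))
      (-2 * P x * (pq.1 ^ 2 + pq.2 ^ 2) / (1 + P x ^ 2) ^ 2) (P x) := by
    have h := (((hasDerivAt_pow 2 (P x)).mul_const (pq.1 ^ 2)).const_sub (pq.2 ^ 2)).div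
      ((hasDerivAt_pow 2 (P x)).const_add 1) hden
    exact h.congr_deriv (by field_simp; ring)
  exact fderiv_comp_apply_of_hasDerivAt hP hderiv w

theorem poissonBracket_geodesicHamiltonian_slopeIntegral (hLam : DifferentiableAt ℝ Lam x)
    (hLam0 : Lam x ≠ 0) (hP : DifferentiableAt ℝ P x) (hP0 : P x ≠ 0) (pq : ℝ × ℝ) :
    poissonBracket (geodesicHamiltonian Lam) (slopeIntegral P) x pq
      = -2 * P x * (pq.1 ^ 2 + pq.2 ^ 2) / (Lam x * (1 + P x ^ 2) ^ 2) *
          (pq.1 * (pdu P x + P x * (1 + P x ^ 2) * pdu Lam x / (2 * Lam x))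
            + pq.2 * (pdv P x - (1 + P x ^ 2) * pdv Lam x / (2 * P x * Lam x))) := by
  simp only [poissonBracket, pdu, pdv, fderiv_geodesicHamiltonian_momentum,
    fderiv_slopeIntegral_momentum, fderiv_geodesicHamiltonian_position hLam hLam0,
    fderiv_slopeIntegral_position hP]
  field_simp
  ring

end

theorem integrating_factor_gives_first_integral_general
    (U : Set (ℝ × ℝ))
    (Lam P : ℝ × ℝ → ℝ)
    (hLam : ∀ p ∈ U, DifferentiableAt ℝ Lam p)
    (hLampos : ∀ p ∈ U, 0 < Lam p)
    (hP : ∀ p ∈ U, DifferentiableAt ℝ P p)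
    (hP0 : ∀ p ∈ U, P p ≠ 0)
    (hPu : ∀ p ∈ U, pdu P p = -(P p * (1 + (P p) ^ 2) * pdu Lam p) / (2 * Lam p))
    (hPv : ∀ p ∈ U, pdv P p = (1 + (P p) ^ 2) * pdv Lam p / (2 * P p * Lam p))
    (H I₂ : ℝ × ℝ → ℝ × ℝ → ℝ)
    (hH : ∀ x pq : ℝ × ℝ, H x pq = (pq.1 ^ 2 + pq.2 ^ 2) / (2 * Lam x))
    (hI₂ : ∀ x pq : ℝ × ℝ,
      I₂ x pq = (pq.2 ^ 2 - (P x) ^ 2 * pq.1 ^ 2) / (1 + (P x) ^ 2)) :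
    ∀ x ∈ U, ∀ pq : ℝ × ℝ, poissonBracket H I₂ x pq = 0 := by
  obtain rfl : H = geodesicHamiltonian Lam := funext₂ hH
  obtain rfl : I₂ = slopeIntegral P := funext₂ hI₂
  intro x hx pq
  rw [poissonBracket_geodesicHamiltonian_slopeIntegral (hLam x hx) (hLampos x hx).ne' (hP x hx)
    (hP0 x hx), hPu x hx, hPv x hx]
  ring

/-- if `P` solves the first-order system expressing that `dv/du = ±P`
are geodesic for `Λ(du² + dv²)`, then `I₂ = (q² − P²p²)/(1 + P²)` Poisson-commutes
with the Hamiltonian `H = (p² + q²)/(2Λ)`. -/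
theorem integrating_factor_gives_first_integral
    (U : Set (ℝ × ℝ)) (hU : IsOpen U)
    (Lam P : ℝ × ℝ → ℝ)
    (hLam : ∀ p ∈ U, DifferentiableAt ℝ Lam p)
    (hLampos : ∀ p ∈ U, 0 < Lam p)
    (hP : ∀ p ∈ U, DifferentiableAt ℝ P p)
    (hP0 : ∀ p ∈ U, P p ≠ 0)
    (hPu : ∀ p ∈ U, pdu P p = -(P p * (1 + (P p) ^ 2) * pdu Lam p) / (2 * Lam p))
    (hPv : ∀ p ∈ U, pdv P p = (1 + (P p) ^ 2) * pdv Lam p / (2 * P p * Lam p))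
    (H I₂ : ℝ × ℝ → ℝ × ℝ → ℝ)
    (hH : ∀ x pq : ℝ × ℝ, H x pq = (pq.1 ^ 2 + pq.2 ^ 2) / (2 * Lam x))
    (hI₂ : ∀ x pq : ℝ × ℝ,
      I₂ x pq = (pq.2 ^ 2 - (P x) ^ 2 * pq.1 ^ 2) / (1 + (P x) ^ 2)) :
    ∀ x ∈ U, ∀ pq : ℝ × ℝ, poissonBracket H I₂ x pq = 0 :=
  integrating_factor_gives_first_integral_general U Lam P hLam hLampos hP hP0 hPu hPv H I₂ hH hI₂
end

section
/- Let U ⊆ ℝ² be open and connected, let Λ : U → ℝ be differentiable and positive, and let P : U → ℝ be differentiable and nowhere zero, satisfying P_u = −P(1+P²)Λ_u/(2Λ) and P_v = (1+P²)Λ_v/(2PΛ) on U. Let μ : U → ℝ be differentiable and suppose that the canonical Poisson bracket {H, μ·(q² − P²p²)} vanishes identically on U × ℝ², where H(u,v,p,q) = (p² + q²)/(2Λ(u,v)). Then the function μ·(1 + P²) is constant on U. -/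
theorem fderiv_fun_inv_apply {𝕜 E : Type*} [NontriviallyNormedField 𝕜] [NormedAddCommGroup E]
    [NormedSpace 𝕜 E] {f : E → 𝕜} {x : E} (hf : DifferentiableAt 𝕜 f x) (hx : f x ≠ 0) (v : E) :
    fderiv 𝕜 (fun y => (f y)⁻¹) x v = -fderiv 𝕜 f x v / f x ^ 2 := by
  rw [show (fun y => (f y)⁻¹) = (fun y => y⁻¹) ∘ f from rfl,
    ((hasDerivAt_inv hx).comp_hasFDerivAt x hf.hasFDerivAt).fderiv]
  simp [div_eq_mul_inv, mul_comm]

theorem fderiv_eq_zero_of_pdu_eq_zero_of_pdv_eq_zero {f : ℝ × ℝ → ℝ} {x : ℝ × ℝ}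
    (hu : pdu f x = 0) (hv : pdv f x = 0) : fderiv ℝ f x = 0 := by
  ext
  exacts [hu, hv]

def diagQuadratic (a b : ℝ × ℝ → ℝ) (x pq : ℝ × ℝ) : ℝ := a x * pq.1 ^ 2 + b x * pq.2 ^ 2

section diagQuadratic

variable {a b c d : ℝ × ℝ → ℝ} {x : ℝ × ℝ}

theorem fderiv_diagQuadratic_momentum (pq : ℝ × ℝ) :
    fderiv ℝ (diagQuadratic a b x) pq = (2 * a x * pq.1) • ContinuousLinearMap.fst ℝ ℝ ℝ
      + (2 * b x * pq.2) • ContinuousLinearMap.snd ℝ ℝ ℝ := by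
  refine (((hasFDerivAt_fst.pow 2).const_mul (a x)).fun_add
    ((hasFDerivAt_snd.pow 2).const_mul (b x))).fderiv.trans ?_
  ext <;> simp [mul_comm, mul_left_comm]

theorem fderiv_diagQuadratic_position (ha : DifferentiableAt ℝ a x) (hb : DifferentiableAt ℝ b x)
    (pq : ℝ × ℝ) :
    fderiv ℝ (fun y => diagQuadratic a b y pq) x
      = pq.1 ^ 2 • fderiv ℝ a x + pq.2 ^ 2 • fderiv ℝ b x := by
  refine ((ha.hasFDerivAt.mul_const (pq.1 ^ 2)).fun_add
    (hb.hasFDerivAt.mul_const (pq.2 ^ 2))).fderiv.trans ?_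
  ext <;> simp

theorem poissonBracket_diagQuadratic (ha : DifferentiableAt ℝ a x) (hb : DifferentiableAt ℝ b x)
    (hc : DifferentiableAt ℝ c x) (hd : DifferentiableAt ℝ d x) (p q : ℝ) :
    poissonBracket (diagQuadratic a b) (diagQuadratic c d) x (p, q)
      = 2 * ((a x * pdu c x - pdu a x * c x) * p ^ 3
        + (b x * pdv c x - pdv a x * d x) * p ^ 2 * q
        + (a x * pdu d x - pdu b x * c x) * p * q ^ 2
        + (b x * pdv d x - pdv b x * d x) * q ^ 3) := by
  simp only [poissonBracket, fderiv_diagQuadratic_momentum, fderiv_diagQuadratic_position ha hb,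
    fderiv_diagQuadratic_position hc hd, pdu, pdv, add_apply, smul_apply, smul_eq_mul,
    ContinuousLinearMap.coe_fst', ContinuousLinearMap.coe_snd', mul_one, mul_zero, add_zero,
    zero_add]
  ring

end diagQuadratic

theorem binary_cubic_coeffs_eq_zero {A B C D : ℝ}
    (h : ∀ p q : ℝ, A * p ^ 3 + B * p ^ 2 * q + C * p * q ^ 2 + D * q ^ 3 = 0) :
    A = 0 ∧ B = 0 ∧ C = 0 ∧ D = 0 := by
  have h10 := h 1 0
  have h01 := h 0 1
  have h11 := h 1 1
  have h1m := h 1 (-1)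
  norm_num at h10 h01 h11 h1m
  refine ⟨h10, ?_, ?_, h01⟩ <;> linarith

section geodesic

variable {Lam P μ : ℝ × ℝ → ℝ} {x : ℝ × ℝ}

theorem pdu_pdv_of_poissonBracket_eq_zero (hLam : DifferentiableAt ℝ Lam x) (hL : Lam x ≠ 0)
    (hP : DifferentiableAt ℝ P x) (hμ : DifferentiableAt ℝ μ x)
    (h : ∀ pq, poissonBracket (diagQuadratic (fun y => (2 * Lam y)⁻¹) (fun y => (2 * Lam y)⁻¹))
      (diagQuadratic (fun y => -(μ y * P y ^ 2)) μ) x pq = 0) :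
    Lam x * pdu μ x = μ x * P x ^ 2 * pdu Lam x ∧ Lam x * pdv μ x = -(μ x * pdv Lam x) := by
  have ha : DifferentiableAt ℝ (fun y => (2 * Lam y)⁻¹) x := by fun_prop (disch := simpa)
  have hc : DifferentiableAt ℝ (fun y => -(μ y * P y ^ 2)) x := by fun_prop
  have hda (v : ℝ × ℝ) :
      fderiv ℝ (fun y => (2 * Lam y)⁻¹) x v = -fderiv ℝ Lam x v / (2 * Lam x ^ 2) := by
    rw [fderiv_fun_inv_apply (by fun_prop) (by simpa), fderiv_const_mul hLam]
    simp only [smul_apply, smul_eq_mul]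
    field_simp
  obtain ⟨-, -, hu, hv⟩ := binary_cubic_coeffs_eq_zero fun p q => by
    have hpq := h (p, q)
    rw [poissonBracket_diagQuadratic ha ha hc hμ] at hpq
    exact (mul_eq_zero.1 hpq).resolve_left two_ne_zero
  simp only [pdu, pdv, hda] at hu hv ⊢
  constructor
  · field_simp at hu
    linear_combination hu
  · field_simp at hv
    linear_combination hv

theorem fderiv_mul_one_add_sq_eq_zero (hL : Lam x ≠ 0) (hP0 : P x ≠ 0)
    (hP : DifferentiableAt ℝ P x) (hμ : DifferentiableAt ℝ μ x)
    (hPu : pdu P x = -(P x * (1 + (P x) ^ 2) * pdu Lam x) / (2 * Lam x))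
    (hPv : pdv P x = (1 + (P x) ^ 2) * pdv Lam x / (2 * P x * Lam x))
    (hμu : Lam x * pdu μ x = μ x * P x ^ 2 * pdu Lam x)
    (hμv : Lam x * pdv μ x = -(μ x * pdv Lam x)) :
    fderiv ℝ (fun y => μ y * (1 + P y ^ 2)) x = 0 := by
  have hg (v : ℝ × ℝ) : fderiv ℝ (fun y => μ y * (1 + P y ^ 2)) x v
      = fderiv ℝ μ x v * (1 + P x ^ 2) + μ x * (2 * P x * fderiv ℝ P x v) := by
    rw [fderiv_fun_mul hμ (by fun_prop), fderiv_const_add, fderiv_fun_pow 2 hP]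
    simp only [Nat.add_one_sub_one, pow_one, nsmul_eq_mul, Nat.cast_ofNat, add_apply, smul_apply,
      smul_eq_mul]
    ring
  apply fderiv_eq_zero_of_pdu_eq_zero_of_pdv_eq_zero
  · rw [pdu, hg, ← pdu, ← pdu, hPu]
    field_simp
    linear_combination (1 + P x ^ 2) * hμu
  · rw [pdv, hg, ← pdv, ← pdv, hPv]
    field_simp
    linear_combination (1 + P x ^ 2) * hμv

end geodesic

/-- the integrating factor `μ` making `μ(q² − P²p²)` a first integral
of the geodesic flow of `Λ(du² + dv²)` is proportional to `1/(1+P²)`: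
`μ(1 + P²)` is constant on the connected set `U`. -/
theorem integrating_factor_unique
    (U : Set (ℝ × ℝ)) (hU : IsOpen U) (hUconn : IsConnected U)
    (Lam P : ℝ × ℝ → ℝ)
    (hLam : ∀ p ∈ U, DifferentiableAt ℝ Lam p)
    (hLampos : ∀ p ∈ U, 0 < Lam p)
    (hP : ∀ p ∈ U, DifferentiableAt ℝ P p)
    (hP0 : ∀ p ∈ U, P p ≠ 0)
    (hPu : ∀ p ∈ U, pdu P p = -(P p * (1 + (P p) ^ 2) * pdu Lam p) / (2 * Lam p))
    (hPv : ∀ p ∈ U, pdv P p = (1 + (P p) ^ 2) * pdv Lam p / (2 * P p * Lam p))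
    (μ : ℝ × ℝ → ℝ)
    (hμ : ∀ p ∈ U, DifferentiableAt ℝ μ p)
    (H K : ℝ × ℝ → ℝ × ℝ → ℝ)
    (hH : ∀ x pq : ℝ × ℝ, H x pq = (pq.1 ^ 2 + pq.2 ^ 2) / (2 * Lam x))
    (hK : ∀ x pq : ℝ × ℝ,
      K x pq = μ x * (pq.2 ^ 2 - (P x) ^ 2 * pq.1 ^ 2))
    (hbracket : ∀ x ∈ U, ∀ pq : ℝ × ℝ, poissonBracket H K x pq = 0) :
    ∃ c : ℝ, ∀ x ∈ U, μ x * (1 + (P x) ^ 2) = c := by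
  have hH' : H = diagQuadratic (fun y => (2 * Lam y)⁻¹) (fun y => (2 * Lam y)⁻¹) := by
    funext x pq
    rw [hH, diagQuadratic]
    ring
  have hK' : K = diagQuadratic (fun y => -(μ y * P y ^ 2)) μ := by
    funext x pq
    rw [hK, diagQuadratic]
    ring
  subst hH' hK'
  refine hU.exists_is_const_of_fderiv_eq_zero hUconn.isPreconnected
    (fun x hx => ((hμ x hx).mul (((hP x hx).pow 2).const_add 1)).differentiableWithinAt)
    fun x hx => ?_
  obtain ⟨hμu, hμv⟩ := pdu_pdv_of_poissonBracket_eq_zero (hLam x hx) (hLampos x hx).ne'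
    (hP x hx) (hμ x hx) (hbracket x hx)
  exact fderiv_mul_one_add_sq_eq_zero (hLampos x hx).ne' (hP0 x hx) (hP x hx) (hμ x hx)
    (hPu x hx) (hPv x hx) hμu hμv
end

section
/- Let a, b : ℝ → ℝ be continuously differentiable and let (u,v,p,q) : J → ℝ⁴ be a differentiable solution on an interval J of Hamilton's equations u' = ∂H/∂p, v' = ∂H/∂q, p' = −∂H/∂u, q' = −∂H/∂v for H(u,v,p,q) = (p² + q²)/(2(a(u)² + b(v)²)), with a(u(t))² + b(v(t))² ≠ 0 for all t ∈ J. Suppose t₀, t₁ ∈ J are times with q(t₀) = 0, q(t₁) = 0 and p(t₀) ≠ 0. Then b(v(t₀))² = b(v(t₁))². (At a point of tangency of the geodesic with a coordinate line v = const, the value b(v)² equals the conserved ratio −I₀/(2H); hence all coordinate lines v = const touched by a given geodesic carry the same caustic label.) -/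
/-!
Along the flow, `2H = (p² + q²)/(a² + b²)` and `I₀` have zero derivative (direct computation from
Hamilton's equations), so both are constant on the interval by the mean value theorem. Where
`q = 0` one has `I₀ = b(v)² · 2H`, and `2H ≠ 0` there because `p ≠ 0`; hence `b(v)² = I₀ / 2H`
takes the same value at every such time.
-/

section PartialDerivatives

variable {F : Type*} [NormedAddCommGroup F] [NormedSpace ℝ F] {f : ℝ × ℝ → F} {x y : ℝ} {d : F}

theorem fderiv_apply_one_zero_eq_of_hasDerivAt (hf : DifferentiableAt ℝ f (x, y))
    (h : HasDerivAt (fun s ↦ f (s, y)) d x) : fderiv ℝ f (x, y) (1, 0) = d :=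
  (hf.hasFDerivAt.comp_hasDerivAt x ((hasDerivAt_id x).prodMk (hasDerivAt_const x y))).unique h

theorem fderiv_apply_zero_one_eq_of_hasDerivAt (hf : DifferentiableAt ℝ f (x, y))
    (h : HasDerivAt (fun s ↦ f (x, s)) d y) : fderiv ℝ f (x, y) (0, 1) = d :=
  (hf.hasFDerivAt.comp_hasDerivAt y ((hasDerivAt_const y x).prodMk (hasDerivAt_id y))).unique h

end PartialDerivatives

theorem Convex.is_const_of_hasDerivAt_zero {E : Type*} [NormedAddCommGroup E] [NormedSpace ℝ E]
    {s : Set ℝ} (hs : Convex ℝ s) {f : ℝ → E} (hf : ∀ t ∈ s, HasDerivAt f 0 t) {x y : ℝ}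
    (hx : x ∈ s) (hy : y ∈ s) : f x = f y := by
  have h := hs.norm_image_sub_le_of_norm_hasDerivWithin_le (C := 0)
    (fun t ht ↦ (hf t ht).hasDerivWithinAt) (fun _ _ ↦ by simp) hx hy
  rw [zero_mul, norm_le_zero_iff, sub_eq_zero] at h
  exact h.symm

section KineticEnergy

variable (c x y : ℝ)

theorem fderiv_kinetic_apply_one_zero :
    fderiv ℝ (fun pq : ℝ × ℝ ↦ (pq.1 ^ 2 + pq.2 ^ 2) / (2 * c)) (x, y) (1, 0) = x / c :=
  fderiv_apply_one_zero_eq_of_hasDerivAt (by fun_prop)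
    ((((hasDerivAt_pow 2 x).add_const (y ^ 2)).div_const (2 * c)).congr_deriv (by ring))

theorem fderiv_kinetic_apply_zero_one :
    fderiv ℝ (fun pq : ℝ × ℝ ↦ (pq.1 ^ 2 + pq.2 ^ 2) / (2 * c)) (x, y) (0, 1) = y / c :=
  fderiv_apply_zero_one_eq_of_hasDerivAt (by fun_prop)
    ((((hasDerivAt_pow 2 y).const_add (x ^ 2)).div_const (2 * c)).congr_deriv (by ring))

end KineticEnergy

section ConformalFactor

variable {a b : ℝ → ℝ} {x y a' b' : ℝ} (K : ℝ)

theorem differentiableAt_div_conformalFactor (ha : DifferentiableAt ℝ a x)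
    (hb : DifferentiableAt ℝ b y) (hc : a x ^ 2 + b y ^ 2 ≠ 0) :
    DifferentiableAt ℝ (fun z : ℝ × ℝ ↦ K / (2 * (a z.1 ^ 2 + b z.2 ^ 2))) (x, y) := by
  have ha' : DifferentiableAt ℝ (fun z : ℝ × ℝ ↦ a z.1) (x, y) := ha.comp _ differentiableAt_fst
  have hb' : DifferentiableAt ℝ (fun z : ℝ × ℝ ↦ b z.2) (x, y) := hb.comp _ differentiableAt_snd
  fun_prop (disch := exact mul_ne_zero two_ne_zero hc)

theorem fderiv_div_conformalFactor_apply_one_zero (ha : HasDerivAt a a' x)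
    (hb : DifferentiableAt ℝ b y) (hc : a x ^ 2 + b y ^ 2 ≠ 0) :
    fderiv ℝ (fun z : ℝ × ℝ ↦ K / (2 * (a z.1 ^ 2 + b z.2 ^ 2))) (x, y) (1, 0) =
      -(K * a x * a' / (a x ^ 2 + b y ^ 2) ^ 2) := by
  refine fderiv_apply_one_zero_eq_of_hasDerivAt
    (differentiableAt_div_conformalFactor K ha.differentiableAt hb hc) ?_
  refine ((hasDerivAt_const x K).div (((ha.fun_pow 2).add_const (b y ^ 2)).const_mul 2)
    (mul_ne_zero two_ne_zero hc)).congr_deriv ?_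
  field_simp
  ring

theorem fderiv_div_conformalFactor_apply_zero_one (ha : DifferentiableAt ℝ a x)
    (hb : HasDerivAt b b' y) (hc : a x ^ 2 + b y ^ 2 ≠ 0) :
    fderiv ℝ (fun z : ℝ × ℝ ↦ K / (2 * (a z.1 ^ 2 + b z.2 ^ 2))) (x, y) (0, 1) =
      -(K * b y * b' / (a x ^ 2 + b y ^ 2) ^ 2) := by
  refine fderiv_apply_zero_one_eq_of_hasDerivAt
    (differentiableAt_div_conformalFactor K ha hb.differentiableAt hc) ?_
  refine ((hasDerivAt_const y K).div (((hb.fun_pow 2).const_add (a x ^ 2)).const_mul 2)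
    (mul_ne_zero two_ne_zero hc)).congr_deriv ?_
  field_simp
  ring

end ConformalFactor

/-- Twice the Hamiltonian `H`. -/
noncomputable def liouvilleEnergy (a b : ℝ → ℝ) (u v p q : ℝ) : ℝ :=
  (p ^ 2 + q ^ 2) / (a u ^ 2 + b v ^ 2)

/-- The quadratic integral `I₀`. -/
noncomputable def liouvilleIntegral (a b : ℝ → ℝ) (u v p q : ℝ) : ℝ :=
  (b v ^ 2 * p ^ 2 - a u ^ 2 * q ^ 2) / (a u ^ 2 + b v ^ 2)

theorem liouvilleIntegral_q_zero (a b : ℝ → ℝ) (u v p : ℝ) :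
    liouvilleIntegral a b u v p 0 = b v ^ 2 * liouvilleEnergy a b u v p 0 := by
  simp only [liouvilleIntegral, liouvilleEnergy]
  ring

theorem liouvilleEnergy_ne_zero {a b : ℝ → ℝ} {u v p : ℝ} (q : ℝ) (hp : p ≠ 0)
    (hc : a u ^ 2 + b v ^ 2 ≠ 0) : liouvilleEnergy a b u v p q ≠ 0 :=
  div_ne_zero (by positivity) hc

/-- Hamilton's equations of `H` at time `t`, with the partial derivatives of `H` worked out. -/
structure IsLiouvilleFlowAt (a b u v p q : ℝ → ℝ) (t : ℝ) : Prop where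
  conformalFactor_ne_zero : a (u t) ^ 2 + b (v t) ^ 2 ≠ 0
  hasDerivAt_a : HasDerivAt a (deriv a (u t)) (u t)
  hasDerivAt_b : HasDerivAt b (deriv b (v t)) (v t)
  hasDerivAt_u : HasDerivAt u (p t / (a (u t) ^ 2 + b (v t) ^ 2)) t
  hasDerivAt_v : HasDerivAt v (q t / (a (u t) ^ 2 + b (v t) ^ 2)) t
  hasDerivAt_p : HasDerivAt p
    ((p t ^ 2 + q t ^ 2) * a (u t) * deriv a (u t) / (a (u t) ^ 2 + b (v t) ^ 2) ^ 2) t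
  hasDerivAt_q : HasDerivAt q
    ((p t ^ 2 + q t ^ 2) * b (v t) * deriv b (v t) / (a (u t) ^ 2 + b (v t) ^ 2) ^ 2) t

namespace IsLiouvilleFlowAt

variable {a b u v p q : ℝ → ℝ} {t : ℝ}

theorem hasDerivAt_conformalFactor (h : IsLiouvilleFlowAt a b u v p q t) :
    HasDerivAt (fun s ↦ a (u s) ^ 2 + b (v s) ^ 2)
      (2 * a (u t) * deriv a (u t) * p t / (a (u t) ^ 2 + b (v t) ^ 2) +
        2 * b (v t) * deriv b (v t) * q t / (a (u t) ^ 2 + b (v t) ^ 2)) t := by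
  refine (((h.hasDerivAt_a.comp t h.hasDerivAt_u).fun_pow 2).add
    ((h.hasDerivAt_b.comp t h.hasDerivAt_v).fun_pow 2)).congr_deriv ?_
  simp only [Function.comp_apply]
  ring

theorem hasDerivAt_liouvilleEnergy (h : IsLiouvilleFlowAt a b u v p q t) :
    HasDerivAt (fun s ↦ liouvilleEnergy a b (u s) (v s) (p s) (q s)) 0 t := by
  refine (((h.hasDerivAt_p.fun_pow 2).add (h.hasDerivAt_q.fun_pow 2)).div
    h.hasDerivAt_conformalFactor h.conformalFactor_ne_zero).congr_deriv ?_
  have hc := h.conformalFactor_ne_zero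
  simp only [Pi.add_apply]
  field_simp
  ring

theorem hasDerivAt_liouvilleIntegral (h : IsLiouvilleFlowAt a b u v p q t) :
    HasDerivAt (fun s ↦ liouvilleIntegral a b (u s) (v s) (p s) (q s)) 0 t := by
  have hau := h.hasDerivAt_a.comp t h.hasDerivAt_u
  have hbv := h.hasDerivAt_b.comp t h.hasDerivAt_v
  refine ((((hbv.fun_pow 2).mul (h.hasDerivAt_p.fun_pow 2)).sub
    ((hau.fun_pow 2).mul (h.hasDerivAt_q.fun_pow 2))).div
    h.hasDerivAt_conformalFactor h.conformalFactor_ne_zero).congr_deriv ?_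
  have hc := h.conformalFactor_ne_zero
  simp only [Pi.sub_apply, Pi.mul_apply, Function.comp_apply]
  field_simp
  ring

end IsLiouvilleFlowAt

theorem isLiouvilleFlowAt_of_hamilton {a b u v p q : ℝ → ℝ} {t : ℝ} {H : ℝ × ℝ → ℝ × ℝ → ℝ}
    (hH : ∀ x pq : ℝ × ℝ, H x pq = (pq.1 ^ 2 + pq.2 ^ 2) / (2 * (a x.1 ^ 2 + b x.2 ^ 2)))
    (ha : DifferentiableAt ℝ a (u t)) (hb : DifferentiableAt ℝ b (v t))
    (hc : a (u t) ^ 2 + b (v t) ^ 2 ≠ 0)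
    (hu : HasDerivAt u (fderiv ℝ (H (u t, v t)) (p t, q t) (1, 0)) t)
    (hv : HasDerivAt v (fderiv ℝ (H (u t, v t)) (p t, q t) (0, 1)) t)
    (hp : HasDerivAt p (-(fderiv ℝ (fun x ↦ H x (p t, q t)) (u t, v t) (1, 0))) t)
    (hq : HasDerivAt q (-(fderiv ℝ (fun x ↦ H x (p t, q t)) (u t, v t) (0, 1))) t) :
    IsLiouvilleFlowAt a b u v p q t := by
  have hHmomentum : H (u t, v t) =
      fun pq : ℝ × ℝ ↦ (pq.1 ^ 2 + pq.2 ^ 2) / (2 * (a (u t) ^ 2 + b (v t) ^ 2)) :=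
    funext (hH _)
  have hHposition : (fun x ↦ H x (p t, q t)) =
      fun z : ℝ × ℝ ↦ (p t ^ 2 + q t ^ 2) / (2 * (a z.1 ^ 2 + b z.2 ^ 2)) :=
    funext fun z ↦ hH z _
  rw [hHmomentum, fderiv_kinetic_apply_one_zero] at hu
  rw [hHmomentum, fderiv_kinetic_apply_zero_one] at hv
  rw [hHposition, fderiv_div_conformalFactor_apply_one_zero _ ha.hasDerivAt hb hc, neg_neg] at hp
  rw [hHposition, fderiv_div_conformalFactor_apply_zero_one _ ha hb.hasDerivAt hc, neg_neg] at hq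
  exact ⟨hc, ha.hasDerivAt, hb.hasDerivAt, hu, hv, hp, hq⟩

/-- along a geodesic of the Liouville metric (a solution of
Hamilton's equations for `H = (p² + q²)/(2(a(u)² + b(v)²))`), all points of
tangency with coordinate lines `v = const` (i.e. times with `q = 0`) carry the
same caustic label: `b(v(t₀))² = b(v(t₁))²`. -/
theorem caustic_label_constant
    (a b : ℝ → ℝ)
    (ha : ContDiff ℝ 1 a) (hb : ContDiff ℝ 1 b)
    (H : ℝ × ℝ → ℝ × ℝ → ℝ)
    (hH : ∀ x pq : ℝ × ℝ,
      H x pq = (pq.1 ^ 2 + pq.2 ^ 2) / (2 * ((a x.1) ^ 2 + (b x.2) ^ 2)))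
    (J : Set ℝ) (hJ : Convex ℝ J)
    (u v p q : ℝ → ℝ)
    (hne : ∀ t ∈ J, (a (u t)) ^ 2 + (b (v t)) ^ 2 ≠ 0)
    (hu : ∀ t ∈ J, HasDerivAt u (fderiv ℝ (H (u t, v t)) (p t, q t) (1, 0)) t)
    (hv : ∀ t ∈ J, HasDerivAt v (fderiv ℝ (H (u t, v t)) (p t, q t) (0, 1)) t)
    (hp : ∀ t ∈ J, HasDerivAt p
      (-(fderiv ℝ (fun x => H x (p t, q t)) (u t, v t) (1, 0))) t)
    (hq : ∀ t ∈ J, HasDerivAt q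
      (-(fderiv ℝ (fun x => H x (p t, q t)) (u t, v t) (0, 1))) t)
    (t₀ t₁ : ℝ) (ht₀ : t₀ ∈ J) (ht₁ : t₁ ∈ J)
    (hq0 : q t₀ = 0) (hq1 : q t₁ = 0) (hp0 : p t₀ ≠ 0) :
    (b (v t₀)) ^ 2 = (b (v t₁)) ^ 2 := by
  have hflow (t : ℝ) (ht : t ∈ J) : IsLiouvilleFlowAt a b u v p q t :=
    isLiouvilleFlowAt_of_hamilton hH (ha.differentiable one_ne_zero _)
      (hb.differentiable one_ne_zero _) (hne t ht) (hu t ht) (hv t ht) (hp t ht) (hq t ht)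
  have hE := hJ.is_const_of_hasDerivAt_zero
    (fun t ht ↦ (hflow t ht).hasDerivAt_liouvilleEnergy) ht₀ ht₁
  have hI := hJ.is_const_of_hasDerivAt_zero
    (fun t ht ↦ (hflow t ht).hasDerivAt_liouvilleIntegral) ht₀ ht₁
  simp only [hq0, hq1, liouvilleIntegral_q_zero] at hE hI
  rw [← hE] at hI
  exact mul_right_cancel₀ (liouvilleEnergy_ne_zero 0 hp0 (hne t₀ ht₀)) hI
end

section
/- Let ε ∈ {1, −1}, let k ∈ ℝ with k ≠ 0, let l ∈ ℝ, let I ⊆ (0, ∞) be an open interval, and let y : I → ℝ be twice differentiable with y(z) ≠ l and k²(y(z) − l)² − k z² = ε for all z ∈ I. Then y solves the geodesic equation z³ y''(z) = ε (y'(z))³ for all z ∈ I. -/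
/-!
Write `u = y - l`. Differentiating the conic `k²u² - kz² = ε` twice gives `k u u' = z` and
`k (u'² + u u'') = 1`. Hence `z³ u'' = k² u² u'³ · (k u u'') = k² u² u'³ (1 - k u'²)
= u'³ (k² u² - k z²) = ε u'³`.
-/

open Filter Topology

theorem HasDerivAt.eq_zero_of_eqOn_const {𝕜 F : Type*} [NontriviallyNormedField 𝕜]
    [NormedAddCommGroup F] [NormedSpace 𝕜 F] {f : 𝕜 → F} {f' c : F} {s : Set 𝕜} {x : 𝕜}
    (h : HasDerivAt f f' x) (hs : IsOpen s) (hx : x ∈ s) (hf : ∀ t ∈ s, f t = c) : f' = 0 := by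
  have hconst : f =ᶠ[𝓝 x] fun _ => c := eventually_of_mem (hs.mem_nhds hx) hf
  exact h.unique ((hasDerivAt_const x c).congr_of_eventuallyEq hconst)

section Conic

variable {ε k l : ℝ} {I : Set ℝ} {y y' y'' : ℝ → ℝ}

theorem conic_deriv_relation (hk : k ≠ 0) (hI : IsOpen I)
    (hy' : ∀ z ∈ I, HasDerivAt y (y' z) z)
    (hconic : ∀ z ∈ I, k ^ 2 * (y z - l) ^ 2 - k * z ^ 2 = ε) {z : ℝ} (hz : z ∈ I) :
    k * (y z - l) * y' z = z := by
  have hderiv : HasDerivAt (fun t => k ^ 2 * (y t - l) ^ 2 - k * t ^ 2)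
      (k ^ 2 * (2 * (y z - l) ^ 1 * y' z) - k * (2 * z ^ 1)) z :=
    ((((hy' z hz).sub_const l).fun_pow 2).const_mul _).sub ((hasDerivAt_pow 2 z).const_mul k)
  have hzero := hderiv.eq_zero_of_eqOn_const hI hz hconic
  have h2k : 2 * k ≠ 0 := mul_ne_zero two_ne_zero hk
  apply mul_left_cancel₀ h2k
  linear_combination hzero

theorem conic_second_deriv_relation (hk : k ≠ 0) (hI : IsOpen I)
    (hy' : ∀ z ∈ I, HasDerivAt y (y' z) z) (hy'' : ∀ z ∈ I, HasDerivAt y' (y'' z) z)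
    (hconic : ∀ z ∈ I, k ^ 2 * (y z - l) ^ 2 - k * z ^ 2 = ε) {z : ℝ} (hz : z ∈ I) :
    k * (y' z ^ 2 + (y z - l) * y'' z) = 1 := by
  have hderiv : HasDerivAt (fun t => k * ((y t - l) * y' t) - t)
      (k * (y' z * y' z + (y z - l) * y'' z) - 1) z :=
    ((((hy' z hz).sub_const l).fun_mul (hy'' z hz)).const_mul k).fun_sub (hasDerivAt_id' z)
  have hzero := hderiv.eq_zero_of_eqOn_const hI hz fun t ht => by
    rw [← mul_assoc, conic_deriv_relation hk hI hy' hconic ht, sub_self]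
  linear_combination hzero

end Conic

theorem cube_mul_eq_of_conic_relations {ε k z u p q : ℝ} (hconic : k ^ 2 * u ^ 2 - k * z ^ 2 = ε)
    (h₁ : k * u * p = z) (h₂ : k * (p ^ 2 + u * q) = 1) : z ^ 3 * q = ε * p ^ 3 := by
  subst h₁ hconic
  linear_combination (k ^ 2 * u ^ 2 * p ^ 3) * h₂

theorem conics_solve_geodesic_equation_general
    (ε : ℝ)
    (k : ℝ) (hk : k ≠ 0) (l : ℝ)
    (I : Set ℝ) (hIopen : IsOpen I)
    (y y' y'' : ℝ → ℝ)
    (hy' : ∀ z ∈ I, HasDerivAt y (y' z) z)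
    (hy'' : ∀ z ∈ I, HasDerivAt y' (y'' z) z)
    (hconic : ∀ z ∈ I, k ^ 2 * (y z - l) ^ 2 - k * z ^ 2 = ε) :
    ∀ z ∈ I, z ^ 3 * y'' z = ε * (y' z) ^ 3 := fun _ hz =>
  cube_mul_eq_of_conic_relations (hconic _ hz) (conic_deriv_relation hk hIopen hy' hconic hz)
    (conic_second_deriv_relation hk hIopen hy' hy'' hconic hz)

/-- every branch of the conic `k²(y − l)² − k z² = ε` (with `k ≠ 0`)
solves the geodesic equation `z³ y'' = ε (y')³` on an open interval `I ⊆ (0, ∞)`. -/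
theorem conics_solve_geodesic_equation
    (ε : ℝ) (hε : ε = 1 ∨ ε = -1)
    (k : ℝ) (hk : k ≠ 0) (l : ℝ)
    (I : Set ℝ) (hIopen : IsOpen I) (hIconv : Convex ℝ I) (hIsub : I ⊆ Set.Ioi 0)
    (y y' y'' : ℝ → ℝ)
    (hy' : ∀ z ∈ I, HasDerivAt y (y' z) z)
    (hy'' : ∀ z ∈ I, HasDerivAt y' (y'' z) z)
    (hyl : ∀ z ∈ I, y z ≠ l)
    (hconic : ∀ z ∈ I, k ^ 2 * (y z - l) ^ 2 - k * z ^ 2 = ε) :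
    ∀ z ∈ I, z ^ 3 * y'' z = ε * (y' z) ^ 3 :=
  conics_solve_geodesic_equation_general ε k hk l I hIopen y y' y'' hy' hy'' hconic
end

section
/- Let ε ∈ {1, −1}, let I ⊆ (0, ∞) be an open interval, and let y : I → ℝ be twice differentiable with z³ y''(z) = ε (y'(z))³ and y'(z) ≠ 0 for all z ∈ I. Then either there exist k ≠ 0 and l ∈ ℝ such that k²(y(z) − l)² − k z² = ε for all z ∈ I, or ε = 1 and there exist l ∈ ℝ and σ ∈ {1, −1} such that y(z) = σ z²/2 + l for all z ∈ I. -/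
/-! The quantity `1 / y'² - ε / z²` is a first integral of `z³ y'' = ε y'³`; call its value `A`.
If `A ≠ 0`, then `y - z / (A y')` is a second first integral `l`, and eliminating `y'` between
the two gives `A² (y - l)² - A z² = ε`. If `A = 0`, then `z² = ε y'²` forces `ε = 1` and
`y' = σ z` with the constant `σ = y' / z = ±1`, so `y` is a parabola. -/

theorem Convex.eq_of_forall_hasDerivAt_zero {I : Set ℝ} (hI : Convex ℝ I) {f : ℝ → ℝ}
    (hf : ∀ z ∈ I, HasDerivAt f 0 z) {a b : ℝ} (ha : a ∈ I) (hb : b ∈ I) : f a = f b := by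
  have h := hI.norm_image_sub_le_of_norm_hasDerivWithin_le (C := 0)
    (fun z hz => (hf z hz).hasDerivWithinAt) (fun _ _ => norm_zero.le) hb ha
  simpa only [zero_mul, norm_le_zero_iff, sub_eq_zero] using h

noncomputable def geodesicFirstIntegral (ε : ℝ) (y' : ℝ → ℝ) (z : ℝ) : ℝ :=
  (y' z ^ 2)⁻¹ - ε * (z ^ 2)⁻¹

section GeodesicEquation

variable {ε A z : ℝ} {y y' y'' : ℝ → ℝ}

theorem hasDerivAt_geodesicFirstIntegral (hz : z ≠ 0) (hy'0 : y' z ≠ 0)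
    (hy'' : HasDerivAt y' (y'' z) z) (hgeo : z ^ 3 * y'' z = ε * y' z ^ 3) :
    HasDerivAt (geodesicFirstIntegral ε y') 0 z := by
  have hy'_inv :
      HasDerivAt (fun t => (y' t ^ 2)⁻¹) (-(2 * y' z ^ 1 * y'' z) / (y' z ^ 2) ^ 2) z :=
    (hy''.pow 2).inv (pow_ne_zero 2 hy'0)
  have hz_inv :
      HasDerivAt (fun t : ℝ => ε * (t ^ 2)⁻¹) (ε * (-(2 * z ^ 1 * 1) / (z ^ 2) ^ 2)) z :=
    (((hasDerivAt_id z).pow 2).inv (pow_ne_zero 2 hz)).const_mul ε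
  refine (hy'_inv.sub hz_inv).congr_deriv ?_
  field_simp
  linear_combination -2 * hgeo

theorem sq_eq_of_geodesicFirstIntegral_eq (hz : z ≠ 0) (hy'0 : y' z ≠ 0)
    (hA : geodesicFirstIntegral ε y' z = A) : z ^ 2 = y' z ^ 2 * (ε + A * z ^ 2) := by
  rw [geodesicFirstIntegral] at hA
  field_simp at hA
  linear_combination hA

theorem hasDerivAt_sub_id_div_mul (hA : A ≠ 0) (hz : z ≠ 0) (hy'0 : y' z ≠ 0)
    (hy' : HasDerivAt y (y' z) z) (hy'' : HasDerivAt y' (y'' z) z)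
    (hgeo : z ^ 3 * y'' z = ε * y' z ^ 3) (hint : z ^ 2 = y' z ^ 2 * (ε + A * z ^ 2)) :
    HasDerivAt (fun t => y t - t / (A * y' t)) 0 z := by
  have hAy' : A * y' z ≠ 0 := mul_ne_zero hA hy'0
  have hy''_eq : A * y' z ^ 3 = y' z - z * y'' z := by
    apply mul_right_cancel₀ (pow_ne_zero 2 hz)
    linear_combination hgeo - y' z * hint
  refine (hy'.sub ((hasDerivAt_id z).div (hy''.const_mul A) hAy')).congr_deriv ?_
  simp only [id]
  field_simp
  linear_combination hy''_eq

theorem hasDerivAt_div_id_of_sq_eq (hz : z ≠ 0) (hy'' : HasDerivAt y' (y'' z) z)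
    (hgeo : z ^ 3 * y'' z = y' z ^ 3) (hpar : z ^ 2 = y' z ^ 2) :
    HasDerivAt (fun t => y' t / t) 0 z := by
  have hy''_eq : z * y'' z = y' z := by
    apply mul_right_cancel₀ (pow_ne_zero 2 hz)
    linear_combination hgeo - y' z * hpar
  refine (hy''.div (hasDerivAt_id z) hz).congr_deriv ?_
  simp only [id, mul_one]
  rw [mul_comm (y'' z), hy''_eq, sub_self, zero_div]

theorem hasDerivAt_sub_mul_sq_div_two {σ : ℝ} (hy : HasDerivAt y (σ * z) z) :
    HasDerivAt (fun t => y t - σ * t ^ 2 / 2) 0 z := by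
  refine (hy.sub ((((hasDerivAt_id z).pow 2).const_mul σ).div_const 2)).congr_deriv ?_
  simp only [id, Nat.cast_ofNat]
  ring

variable {I : Set ℝ} {z₀ : ℝ}

theorem exists_sq_eq_of_geodesic (hI : Convex ℝ I) (hI0 : ∀ z ∈ I, z ≠ 0)
    (hy'' : ∀ z ∈ I, HasDerivAt y' (y'' z) z) (hgeo : ∀ z ∈ I, z ^ 3 * y'' z = ε * y' z ^ 3)
    (hy'0 : ∀ z ∈ I, y' z ≠ 0) (hz₀ : z₀ ∈ I) :
    ∃ A, ∀ z ∈ I, z ^ 2 = y' z ^ 2 * (ε + A * z ^ 2) := by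
  refine ⟨geodesicFirstIntegral ε y' z₀, fun z hz => ?_⟩
  refine sq_eq_of_geodesicFirstIntegral_eq (hI0 z hz) (hy'0 z hz) ?_
  exact hI.eq_of_forall_hasDerivAt_zero
    (fun t ht => hasDerivAt_geodesicFirstIntegral (hI0 t ht) (hy'0 t ht) (hy'' t ht) (hgeo t ht))
    hz hz₀

theorem exists_conic_of_geodesic (hI : Convex ℝ I) (hI0 : ∀ z ∈ I, z ≠ 0)
    (hy' : ∀ z ∈ I, HasDerivAt y (y' z) z) (hy'' : ∀ z ∈ I, HasDerivAt y' (y'' z) z)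
    (hgeo : ∀ z ∈ I, z ^ 3 * y'' z = ε * y' z ^ 3) (hy'0 : ∀ z ∈ I, y' z ≠ 0)
    (hA : A ≠ 0) (hint : ∀ z ∈ I, z ^ 2 = y' z ^ 2 * (ε + A * z ^ 2)) (hz₀ : z₀ ∈ I) :
    ∃ l, ∀ z ∈ I, A ^ 2 * (y z - l) ^ 2 - A * z ^ 2 = ε := by
  refine ⟨y z₀ - z₀ / (A * y' z₀), fun z hz => ?_⟩
  have hl : y z - (y z₀ - z₀ / (A * y' z₀)) = z / (A * y' z) := by
    have := hI.eq_of_forall_hasDerivAt_zero (fun t ht => hasDerivAt_sub_id_div_mul hA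
      (hI0 t ht) (hy'0 t ht) (hy' t ht) (hy'' t ht) (hgeo t ht) (hint t ht)) hz hz₀
    linarith
  have hy'z := hy'0 z hz
  rw [hl]
  field_simp
  linear_combination hint z hz

theorem exists_parabola_of_geodesic (hI : Convex ℝ I) (hI0 : ∀ z ∈ I, z ≠ 0)
    (hy' : ∀ z ∈ I, HasDerivAt y (y' z) z) (hy'' : ∀ z ∈ I, HasDerivAt y' (y'' z) z)
    (hgeo : ∀ z ∈ I, z ^ 3 * y'' z = y' z ^ 3) (hpar : ∀ z ∈ I, z ^ 2 = y' z ^ 2)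
    (hz₀ : z₀ ∈ I) :
    ∃ l σ : ℝ, (σ = 1 ∨ σ = -1) ∧ ∀ z ∈ I, y z = σ * z ^ 2 / 2 + l := by
  obtain ⟨σ, hσ_def⟩ : ∃ σ, y' z₀ / z₀ = σ := ⟨_, rfl⟩
  have hslope : ∀ z ∈ I, y' z = σ * z := fun z hz => by
    have := hI.eq_of_forall_hasDerivAt_zero (fun t ht =>
      hasDerivAt_div_id_of_sq_eq (hI0 t ht) (hy'' t ht) (hgeo t ht) (hpar t ht)) hz hz₀
    rw [← hσ_def, ← this, div_mul_cancel₀ _ (hI0 z hz)]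
  have hσ : σ ^ 2 * z₀ ^ 2 = 1 * z₀ ^ 2 := by
    linear_combination -(y' z₀ + σ * z₀) * hslope z₀ hz₀ - hpar z₀ hz₀
  refine ⟨y z₀ - σ * z₀ ^ 2 / 2, σ,
    sq_eq_one_iff.mp (mul_right_cancel₀ (pow_ne_zero 2 (hI0 z₀ hz₀)) hσ), fun z hz => ?_⟩
  have := hI.eq_of_forall_hasDerivAt_zero
    (fun t ht => hasDerivAt_sub_mul_sq_div_two (hslope t ht ▸ hy' t ht)) hz hz₀
  linarith

end GeodesicEquation

theorem geodesic_equation_solutions_are_conics_general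
    (ε : ℝ) (hε : ε = 1 ∨ ε = -1)
    (I : Set ℝ) (hIconv : Convex ℝ I) (hIsub : I ⊆ Set.Ioi 0)
    (y y' y'' : ℝ → ℝ)
    (hy' : ∀ z ∈ I, HasDerivAt y (y' z) z)
    (hy'' : ∀ z ∈ I, HasDerivAt y' (y'' z) z)
    (hgeo : ∀ z ∈ I, z ^ 3 * y'' z = ε * (y' z) ^ 3)
    (hy'0 : ∀ z ∈ I, y' z ≠ 0) :
    (∃ k : ℝ, k ≠ 0 ∧ ∃ l : ℝ, ∀ z ∈ I, k ^ 2 * (y z - l) ^ 2 - k * z ^ 2 = ε)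
    ∨ (ε = 1 ∧ ∃ l σ : ℝ, (σ = 1 ∨ σ = -1) ∧ ∀ z ∈ I, y z = σ * z ^ 2 / 2 + l) := by
  rcases I.eq_empty_or_nonempty with rfl | ⟨z₀, hz₀⟩
  · exact Or.inl ⟨1, one_ne_zero, 0, by simp⟩
  have hI0 : ∀ z ∈ I, z ≠ 0 := fun z hz => (hIsub hz).ne'
  obtain ⟨A, hint⟩ := exists_sq_eq_of_geodesic hIconv hI0 hy'' hgeo hy'0 hz₀
  by_cases hA : A = 0
  · subst hA
    have hpar : ∀ z ∈ I, z ^ 2 = ε * y' z ^ 2 := fun z hz => by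
      simpa [mul_comm] using hint z hz
    obtain rfl : ε = 1 := hε.resolve_right fun hε' => by
      have := hpar z₀ hz₀
      rw [hε'] at this
      nlinarith [pow_pos (Set.mem_Ioi.mp (hIsub hz₀)) 2, sq_nonneg (y' z₀)]
    simp only [one_mul] at hgeo hpar
    exact Or.inr ⟨rfl, exists_parabola_of_geodesic hIconv hI0 hy' hy'' hgeo hpar hz₀⟩
  · exact Or.inl ⟨A, hA, exists_conic_of_geodesic hIconv hI0 hy' hy'' hgeo hy'0 hA hint hz₀⟩

/-- any solution of the geodesic equation `z³ y'' = ε (y')³` with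
nowhere vanishing `y'` on an open interval `I ⊆ (0, ∞)` either lies on a conic
`k²(y − l)² − k z² = ε` with `k ≠ 0`, or `ε = 1` and `y = ±z²/2 + l`. -/
theorem geodesic_equation_solutions_are_conics
    (ε : ℝ) (hε : ε = 1 ∨ ε = -1)
    (I : Set ℝ) (hIopen : IsOpen I) (hIconv : Convex ℝ I) (hIsub : I ⊆ Set.Ioi 0)
    (y y' y'' : ℝ → ℝ)
    (hy' : ∀ z ∈ I, HasDerivAt y (y' z) z)
    (hy'' : ∀ z ∈ I, HasDerivAt y' (y'' z) z)
    (hgeo : ∀ z ∈ I, z ^ 3 * y'' z = ε * (y' z) ^ 3)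
    (hy'0 : ∀ z ∈ I, y' z ≠ 0) :
    (∃ k : ℝ, k ≠ 0 ∧ ∃ l : ℝ, ∀ z ∈ I, k ^ 2 * (y z - l) ^ 2 - k * z ^ 2 = ε)
    ∨ (ε = 1 ∧ ∃ l σ : ℝ, (σ = 1 ∨ σ = -1) ∧ ∀ z ∈ I, y z = σ * z ^ 2 / 2 + l) :=
  geodesic_equation_solutions_are_conics_general ε hε I hIconv hIsub y y' y'' hy' hy'' hgeo hy'0
end

section
/- Let E, F, G : ℝ → ℝ be continuously differentiable functions of one variable with E(v) > 0 and E(v)G(v) − F(v)² > 0 for all v ∈ ℝ. Then for every v₀ ∈ ℝ there exist δ > 0 and continuously differentiable functions ψ, φ : (−δ, δ) → ℝ with ψ(0) = v₀ and ψ' > 0, such that for all t ∈ (−δ, δ): E(ψ(t))·φ'(t) + F(ψ(t))·ψ'(t) = 0 and E(ψ(t))·φ'(t)² + 2F(ψ(t))·φ'(t)·ψ'(t) + G(ψ(t))·ψ'(t)² = 1. -/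
/-!
Choose `ψ` as the integral curve of `v' = r(v)` through `v₀`, where `r = √(E / (EG - F²))`, and
`φ = -H ∘ ψ` with `H` a primitive of `F / E`. Then `φ' = -(F / E)(ψ) ψ'`, which kills the cross
term, and the `dv²` coefficient becomes `ψ'² (EG - F²) / E = 1`.
-/

open Set

section Calculus

variable {𝕜 : Type*} [NontriviallyNormedField 𝕜] {V : Type*} [NormedAddCommGroup V]
  [NormedSpace 𝕜 V]

theorem contDiffOn_one_of_hasDerivAt {f f' : 𝕜 → V} {s : Set 𝕜} (hs : IsOpen s)
    (hf : ∀ t ∈ s, HasDerivAt f (f' t) t) (hf' : ContinuousOn f' s) : ContDiffOn 𝕜 1 f s := by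
  rw [show (1 : WithTop ℕ∞) = 0 + 1 from rfl, contDiffOn_succ_iff_deriv_of_isOpen hs,
    contDiffOn_zero]
  exact ⟨fun t ht => (hf t ht).differentiableAt.differentiableWithinAt, by simp,
    hf'.congr fun t ht => (hf t ht).deriv⟩

end Calculus

theorem Continuous.contDiff_integral {V : Type*} [NormedAddCommGroup V] [NormedSpace ℝ V]
    [CompleteSpace V] {f : ℝ → V} (hf : Continuous f) (a : ℝ) :
    ContDiff ℝ 1 fun u => ∫ x in a..u, f x :=
  contDiff_one_iff_deriv.2
    ⟨fun b => (hf.integral_hasStrictDerivAt a b).hasDerivAt.differentiableAt,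
      hf.congr fun b => (hf.deriv_integral f a b).symm⟩

theorem ContDiff.exists_contDiffOn_integralCurve {V : Type*} [NormedAddCommGroup V]
    [NormedSpace ℝ V] [CompleteSpace V] {r : V → V} (hr : ContDiff ℝ 1 r) (v₀ : V) :
    ∃ ε > 0, ∃ ψ : ℝ → V, ψ 0 = v₀ ∧ ContDiffOn ℝ 1 ψ (Ioo (-ε) ε) ∧
      ∀ t ∈ Ioo (-ε) ε, HasDerivAt ψ (r (ψ t)) t := by
  obtain ⟨ψ, hψ0, ε, hε, hψ⟩ :=
    hr.contDiffAt.exists_forall_mem_closedBall_exists_eq_forall_mem_Ioo_hasDerivAt₀ 0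
  simp only [zero_sub, zero_add] at hψ
  refine ⟨ε, hε, ψ, hψ0, contDiffOn_one_of_hasDerivAt isOpen_Ioo hψ ?_, hψ⟩
  exact hr.continuous.comp_continuousOn fun t ht => (hψ t ht).continuousAt.continuousWithinAt

section QuadraticForm

variable {E F G : ℝ}

theorem cross_term_eq_zero (hE : E ≠ 0) (p : ℝ) : E * (-(F / E) * p) + F * p = 0 := by
  field_simp
  ring

theorem quadratic_form_eq_one (hE : E ≠ 0) {p : ℝ} (hp : p ^ 2 * (E * G - F ^ 2) = E) :
    E * (-(F / E) * p) ^ 2 + 2 * F * (-(F / E) * p) * p + G * p ^ 2 = 1 := by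
  field_simp
  linear_combination hp

end QuadraticForm

section NormalFormSpeed

variable {E F G : ℝ → ℝ}

noncomputable def normalFormSpeed (E F G : ℝ → ℝ) (v : ℝ) : ℝ :=
  √(E v / (E v * G v - F v ^ 2))

variable (hEpos : ∀ v, 0 < E v) (hdet : ∀ v, 0 < E v * G v - F v ^ 2)
include hEpos hdet

theorem normalFormSpeed_pos (v : ℝ) : 0 < normalFormSpeed E F G v :=
  Real.sqrt_pos.2 (div_pos (hEpos v) (hdet v))

theorem normalFormSpeed_sq_mul (v : ℝ) :
    normalFormSpeed E F G v ^ 2 * (E v * G v - F v ^ 2) = E v := by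
  rw [normalFormSpeed, Real.sq_sqrt (div_pos (hEpos v) (hdet v)).le,
    div_mul_cancel₀ _ (hdet v).ne']

theorem contDiff_normalFormSpeed (hE : ContDiff ℝ 1 E) (hF : ContDiff ℝ 1 F)
    (hG : ContDiff ℝ 1 G) : ContDiff ℝ 1 (normalFormSpeed E F G) :=
  contDiff_iff_contDiffAt.2 fun v =>
    (Real.contDiffAt_sqrt (div_pos (hEpos v) (hdet v)).ne').comp v
      (hE.contDiffAt.div ((hE.contDiffAt.mul hG.contDiffAt).sub (hF.contDiffAt.pow 2))
        (hdet v).ne')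

end NormalFormSpeed

/-- rectification of a metric `g = E(v)du² + 2F(v)du dv + G(v)dv²`
with coefficients independent of `u`: near any `v₀` there is a local substitution
`u ↦ u + φ(v)`, `v ↦ ψ(v)` (with `ψ(0) = v₀`, `ψ' > 0`) killing the cross term and
normalizing the coefficient of `dv²` to `1`, i.e. bringing `g` to `E(v)du² + dv²`. -/
theorem killing_normal_form_coordinates
    (E F G : ℝ → ℝ)
    (hE : ContDiff ℝ 1 E) (hF : ContDiff ℝ 1 F) (hG : ContDiff ℝ 1 G)
    (hEpos : ∀ v : ℝ, 0 < E v)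
    (hdet : ∀ v : ℝ, 0 < E v * G v - (F v) ^ 2) :
    ∀ v₀ : ℝ, ∃ δ > 0, ∃ ψ φ : ℝ → ℝ,
      ContDiffOn ℝ 1 ψ (Set.Ioo (-δ) δ) ∧
      ContDiffOn ℝ 1 φ (Set.Ioo (-δ) δ) ∧
      ψ 0 = v₀ ∧
      (∀ t ∈ Set.Ioo (-δ) δ, 0 < deriv ψ t) ∧
      (∀ t ∈ Set.Ioo (-δ) δ,
        E (ψ t) * deriv φ t + F (ψ t) * deriv ψ t = 0) ∧
      (∀ t ∈ Set.Ioo (-δ) δ,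
        E (ψ t) * (deriv φ t) ^ 2 + 2 * F (ψ t) * deriv φ t * deriv ψ t
          + G (ψ t) * (deriv ψ t) ^ 2 = 1) := by
  intro v₀
  set r := normalFormSpeed E F G
  obtain ⟨ε, hε, ψ, hψ0, hψC, hψ⟩ :=
    (contDiff_normalFormSpeed hEpos hdet hE hF hG).exists_contDiffOn_integralCurve v₀
  have hFE : Continuous fun v => F v / E v :=
    hF.continuous.div hE.continuous fun v => (hEpos v).ne'
  set H := fun v => ∫ x in (0 : ℝ)..v, F x / E x
  have hdψ : ∀ t ∈ Ioo (-ε) ε, deriv ψ t = r (ψ t) := fun t ht => (hψ t ht).deriv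
  have hdφ : ∀ t ∈ Ioo (-ε) ε, deriv (fun t => -H (ψ t)) t = -(F (ψ t) / E (ψ t)) * r (ψ t) :=
    fun t ht => by
      rw [neg_mul]
      exact ((hFE.integral_hasStrictDerivAt 0 (ψ t)).hasDerivAt.comp t (hψ t ht)).neg.deriv
  refine ⟨ε, hε, ψ, fun t => -H (ψ t), hψC, (hFE.contDiff_integral 0).neg.comp_contDiffOn hψC,
    hψ0, fun t ht => ?_, fun t ht => ?_, fun t ht => ?_⟩
  · rw [hdψ t ht]
    exact normalFormSpeed_pos hEpos hdet _
  · rw [hdψ t ht, hdφ t ht]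
    exact cross_term_eq_zero (hEpos _).ne' _
  · rw [hdψ t ht, hdφ t ht]
    exact quadratic_form_eq_one (hEpos _).ne' (normalFormSpeed_sq_mul hEpos hdet _)
end
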